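/- Let k ≥ 2 and m ≥ (432k)² be integers with m − k odd. Then ρ(K^{k−2}_{2,(m−k−1)/2} * K₃) is the largest root of x⁵ − x⁴ + (1−m)x³ + (m−3)x² + ((1/2)mk − (1/2)k² − (1/2)k)x − 1 − k/2 + m − mk/2 + k²/2 = 0, and moreover ρ(K^{k−2}_{2,(m−k−1)/2} * K₃) > √(m − k). -/
import Mathlib


open SimpleGraph

/-- The `l`-edge-connectivity of a graph: the minimum number of edges whose removal
leaves a graph with at least `l` connected components, if the graph has at least `l`
vertices; otherwise the number of vertices. -/
noncomputable def edgeConnL {V : Type*} (l : ℕ) (G : SimpleGraph V) : ℕ :=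
  if l ≤ Nat.card V then
    sInf {c : ℕ | ∃ F : Set (Sym2 V), F ⊆ G.edgeSet ∧ F.ncard = c ∧
      l ≤ Nat.card (G.deleteEdges F).ConnectedComponent}
  else Nat.card V

/-- A graph is minimally `(k,l)`-edge-connected if it is connected, its
`l`-edge-connectivity is at least `k`, and deleting any edge drops the
`l`-edge-connectivity below `k`. -/
def IsMinimallyKLEdgeConnected {V : Type*} (k l : ℕ) (G : SimpleGraph V) : Prop :=
  G.Connected ∧ k ≤ edgeConnL l G ∧
    ∀ e ∈ G.edgeSet, edgeConnL l (G.deleteEdges {e}) < k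

/-- The real adjacency matrix of a simple graph. -/
noncomputable def adjMat {V : Type*} (G : SimpleGraph V) : Matrix V V ℝ :=
  letI := Classical.decRel G.Adj
  G.adjMatrix ℝ

/-- The spectral radius of a graph: the largest (real) eigenvalue of its adjacency matrix. -/
noncomputable def specRad {V : Type*} [Fintype V] [DecidableEq V]
    (G : SimpleGraph V) : ℝ :=
  sSup (spectrum ℝ (adjMat G))

abbrev KbookTriV (p s : ℕ) : Type := (Unit ⊕ Unit) ⊕ ((Fin s ⊕ Fin p) ⊕ Fin 2)

/-- `K^{p}_{2,s} * K₃`: the graph obtained from the disjoint union of the star `K_{1,p}`,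
a triangle `K₃` and the complete bipartite graph `K_{2,s}` by identifying the centre of the
star, one vertex of the triangle and one of the two vertices of degree `s` of `K_{2,s}`
into a single vertex.  Here `Sum.inl (Sum.inl _)` is the identified vertex,
`Sum.inl (Sum.inr _)` is the other vertex of the part of size two, `Fin s` is the part of
size `s`, `Fin p` are the pendant vertices and `Fin 2` are the other two triangle vertices. -/
def KbookTri (p s : ℕ) : SimpleGraph (KbookTriV p s) :=
  SimpleGraph.fromRel (fun a b =>
    match a, b with
    | Sum.inl (Sum.inl _), Sum.inr _ => True
    | Sum.inl (Sum.inr _), Sum.inr (Sum.inl (Sum.inl _)) => True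
    | Sum.inr (Sum.inr _), Sum.inr (Sum.inr _) => True
    | _, _ => False)

/- ## Auxiliary lemmas -/

open Matrix in
lemma AUXmem_spectrum_iff_det {n : Type*} [Fintype n] [DecidableEq n] (M : Matrix n n ℝ) (x : ℝ) :
    x ∈ spectrum ℝ M ↔ (x • (1 : Matrix n n ℝ) - M).det = 0 := by
  rw [spectrum.mem_iff, Algebra.algebraMap_eq_smul_one, Matrix.isUnit_iff_isUnit_det,
    isUnit_iff_ne_zero, not_ne_iff]

open Matrix in
lemma AUXmem_spectrum_of_eigen {n : Type*} [Fintype n] [DecidableEq n] (M : Matrix n n ℝ) (x : ℝ)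
    (f : n → ℝ) (hf : f ≠ 0) (h : M.mulVec f = x • f) : x ∈ spectrum ℝ M := by
  rw [AUXmem_spectrum_iff_det, ← Matrix.exists_mulVec_eq_zero_iff]
  refine ⟨f, hf, ?_⟩
  rw [Matrix.sub_mulVec, Matrix.smul_mulVec, Matrix.one_mulVec, h, sub_self]

open Matrix in
lemma AUXeigen_of_mem_spectrum {n : Type*} [Fintype n] [DecidableEq n] (M : Matrix n n ℝ) (x : ℝ)
    (h : x ∈ spectrum ℝ M) : ∃ f : n → ℝ, f ≠ 0 ∧ M.mulVec f = x • f := by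
  rw [AUXmem_spectrum_iff_det, ← Matrix.exists_mulVec_eq_zero_iff] at h
  obtain ⟨f, hf, h⟩ := h
  refine ⟨f, hf, ?_⟩
  rw [Matrix.sub_mulVec, Matrix.smul_mulVec, Matrix.one_mulVec, sub_eq_zero] at h
  exact h.symm

open scoped Classical in
lemma AUXadjMat_apply {V : Type*} (G : SimpleGraph V) (x y : V) :
    adjMat G x y = if G.Adj x y then 1 else 0 := by
  simp [adjMat]

open scoped Classical in
lemma AUXadjMat_mulVec {V : Type*} [Fintype V] (G : SimpleGraph V) (f : V → ℝ) (z : V) :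
    (adjMat G).mulVec f z = ∑ y : V, (if G.Adj z y then (1:ℝ) else 0) * f y := by
  simp [Matrix.mulVec, dotProduct, AUXadjMat_apply]

/-- The quintic. -/
noncomputable def AUXq (m k x : ℝ) : ℝ :=
  x ^ 5 - x ^ 4 + (1 - m) * x ^ 3 + (m - 3) * x ^ 2 +
    ((1 / 2) * m * k - (1 / 2) * k ^ 2 - (1 / 2) * k) * x
    - 1 - k / 2 + m - m * k / 2 + k ^ 2 / 2

section Graph

open scoped Classical

variable (p s : ℕ)

abbrev vU : KbookTriV p s := Sum.inl (Sum.inl ())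
abbrev vV : KbookTriV p s := Sum.inl (Sum.inr ())
abbrev vS (i : Fin s) : KbookTriV p s := Sum.inr (Sum.inl (Sum.inl i))
abbrev vP (j : Fin p) : KbookTriV p s := Sum.inr (Sum.inl (Sum.inr j))
abbrev vT (i : Fin 2) : KbookTriV p s := Sum.inr (Sum.inr i)

variable (f : KbookTriV p s → ℝ)

lemma mv_u :
    (adjMat (KbookTri p s)).mulVec f (vU p s)
      = (∑ i : Fin s, f (vS p s i)) + (∑ j : Fin p, f (vP p s j))
        + (f (vT p s 0) + f (vT p s 1)) := by
  rw [AUXadjMat_mulVec]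
  simp [Fintype.sum_sum_type, KbookTri, SimpleGraph.fromRel_adj, Fin.sum_univ_two]

lemma mv_v :
    (adjMat (KbookTri p s)).mulVec f (vV p s) = ∑ i : Fin s, f (vS p s i) := by
  rw [AUXadjMat_mulVec]
  simp [Fintype.sum_sum_type, KbookTri, SimpleGraph.fromRel_adj, Fin.sum_univ_two]

lemma mv_s (i : Fin s) :
    (adjMat (KbookTri p s)).mulVec f (vS p s i) = f (vU p s) + f (vV p s) := by
  rw [AUXadjMat_mulVec]
  simp [Fintype.sum_sum_type, KbookTri, SimpleGraph.fromRel_adj, Fin.sum_univ_two]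

lemma mv_p (j : Fin p) :
    (adjMat (KbookTri p s)).mulVec f (vP p s j) = f (vU p s) := by
  rw [AUXadjMat_mulVec]
  simp [Fintype.sum_sum_type, KbookTri, SimpleGraph.fromRel_adj, Fin.sum_univ_two]

lemma mv_t0 :
    (adjMat (KbookTri p s)).mulVec f (vT p s 0) = f (vU p s) + f (vT p s 1) := by
  rw [AUXadjMat_mulVec]
  simp [Fintype.sum_sum_type, KbookTri, SimpleGraph.fromRel_adj, Fin.sum_univ_two,
    Fin.ext_iff]

lemma mv_t1 :
    (adjMat (KbookTri p s)).mulVec f (vT p s 1) = f (vU p s) + f (vT p s 0) := by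
  rw [AUXadjMat_mulVec]
  simp [Fintype.sum_sum_type, KbookTri, SimpleGraph.fromRel_adj, Fin.sum_univ_two,
    Fin.ext_iff]

end Graph
section Key

open scoped Classical

variable (p s : ℕ)

/-- A zero of the quintic is an eigenvalue. -/
lemma AUXroot_mem_spectrum (hs : 2 ≤ s) (x : ℝ)
    (hq : AUXq (2*(s:ℝ)+(p:ℝ)+3) ((p:ℝ)+2) x = 0) :
    x ∈ spectrum ℝ (adjMat (KbookTri p s)) := by
  have hS2 : (2:ℝ) ≤ (s:ℝ) := by exact_mod_cast hs
  -- product form of the quintic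
  have hR : x^2*(x-1)*(x^2-(s:ℝ)) - (s:ℝ)*x^2*(x-1) - (p:ℝ)*(x-1)*(x^2-(s:ℝ))
      - 2*x*(x^2-(s:ℝ)) = 0 := by
    rw [← hq]; unfold AUXq; ring
  by_cases hx0 : x = 0
  · -- 0 is always an eigenvalue (two S-vertices have identical neighbourhoods)
    subst hx0
    rw [AUXmem_spectrum_iff_det]
    have h01 : (⟨0, by omega⟩ : Fin s) ≠ ⟨1, by omega⟩ := by simp [Fin.ext_iff]
    have hcol : ∀ z, ((0:ℝ) • (1 : Matrix (KbookTriV p s) (KbookTriV p s) ℝ)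
        - adjMat (KbookTri p s)) z (vS p s ⟨0, by omega⟩)
        = ((0:ℝ) • 1 - adjMat (KbookTri p s)) z (vS p s ⟨1, by omega⟩) := by
      intro z
      have hadj : (KbookTri p s).Adj z (vS p s ⟨0, by omega⟩)
          ↔ (KbookTri p s).Adj z (vS p s ⟨1, by omega⟩) := by
        rcases z with (⟨⟩|⟨⟩)|((i|j)|t) <;>
          simp [KbookTri, SimpleGraph.fromRel_adj]
      have h1 : (vS p s ⟨0, by omega⟩ : KbookTriV p s) ≠ vS p s ⟨1, by omega⟩ := by
        simp [Fin.ext_iff]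
      simp only [Matrix.sub_apply, Matrix.smul_apply, zero_smul, smul_eq_mul, zero_mul,
        AUXadjMat_apply, Matrix.zero_apply]
      rw [if_congr hadj rfl rfl]
    exact Matrix.det_zero_of_column_eq (by simpa [Fin.ext_iff] using h01) hcol
  · -- x ≠ 0 : construct an explicit eigenvector, polynomial in x
    have hx1 : x ≠ 1 := by
      intro h; subst h
      have : (s:ℝ) = 1 := by linear_combination hR/2
      linarith
    have hx2S : x^2 - (s:ℝ) ≠ 0 := by
      intro h
      have : (s:ℝ)*x^2*(x-1) = 0 := by
        linear_combination -hR + (x^2*(x-1) - (p:ℝ)*(x-1) - 2*x) * h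
      have hx2 : x^2 ≠ 0 := pow_ne_zero _ hx0
      have hS0 : (s:ℝ) ≠ 0 := by linarith
      rcases mul_eq_zero.mp this with h' | h'
      · exact (mul_ne_zero hS0 hx2) h'
      · exact hx1 (by linarith)
    set f : KbookTriV p s → ℝ := fun z =>
      match z with
      | Sum.inl (Sum.inl _) => x*(x-1)*(x^2-(s:ℝ))
      | Sum.inl (Sum.inr _) => (s:ℝ)*x*(x-1)
      | Sum.inr (Sum.inl (Sum.inl _)) => x^2*(x-1)
      | Sum.inr (Sum.inl (Sum.inr _)) => (x-1)*(x^2-(s:ℝ))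
      | Sum.inr (Sum.inr _) => x*(x^2-(s:ℝ))
      with hf
    have hfu : f (vU p s) = x*(x-1)*(x^2-(s:ℝ)) := rfl
    have hfv : f (vV p s) = (s:ℝ)*x*(x-1) := rfl
    have hfs : ∀ i, f (vS p s i) = x^2*(x-1) := fun _ => rfl
    have hfp : ∀ j, f (vP p s j) = (x-1)*(x^2-(s:ℝ)) := fun _ => rfl
    have hft : ∀ i, f (vT p s i) = x*(x^2-(s:ℝ)) := fun _ => rfl
    have hfne : f ≠ 0 := by
      intro h0
      have h2 := congrFun h0 (vU p s)
      rw [hfu] at h2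
      exact (mul_ne_zero (mul_ne_zero hx0 (sub_ne_zero.mpr hx1)) hx2S) (by simpa using h2)
    refine AUXmem_spectrum_of_eigen _ x f hfne ?_
    funext z
    have hsum : ∀ (w : ℝ), ∑ _i : Fin s, w = (s:ℝ) * w := by
      intro w; simp [Finset.sum_const, mul_comm]
    have hsump : ∀ (w : ℝ), ∑ _j : Fin p, w = (p:ℝ) * w := by
      intro w; simp [Finset.sum_const, mul_comm]
    rcases z with (⟨⟩|⟨⟩)|((i|j)|t)
    · rw [show (Sum.inl (Sum.inl ()) : KbookTriV p s) = vU p s from rfl, mv_u]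
      simp only [hfs, hfp, hft, hfu, Finset.sum_const, Finset.card_univ, Fintype.card_fin,
        nsmul_eq_mul, Pi.smul_apply, smul_eq_mul]
      linear_combination -hR
    · rw [show (Sum.inl (Sum.inr ()) : KbookTriV p s) = vV p s from rfl, mv_v]
      simp only [hfs, hfv, Finset.sum_const, Finset.card_univ, Fintype.card_fin,
        nsmul_eq_mul, Pi.smul_apply, smul_eq_mul]
      ring
    · rw [show (Sum.inr (Sum.inl (Sum.inl i)) : KbookTriV p s) = vS p s i from rfl, mv_s,
        hfu, hfv]
      simp only [Pi.smul_apply, smul_eq_mul, hfs]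
      ring
    · rw [show (Sum.inr (Sum.inl (Sum.inr j)) : KbookTriV p s) = vP p s j from rfl, mv_p,
        hfu]
      simp only [Pi.smul_apply, smul_eq_mul, hfp]
      ring
    · have key : ∀ t : Fin 2, (adjMat (KbookTri p s)).mulVec f (vT p s t)
          = x*(x-1)*(x^2-(s:ℝ)) + x*(x^2-(s:ℝ)) := by
        intro t
        induction t using Fin.cases with
        | zero => rw [mv_t0, hfu, hft 1]
        | succ i =>
          rw [Fin.fin_one_eq_zero i, show ((0 : Fin 1).succ : Fin 2) = 1 from rfl,
            mv_t1, hfu, hft 0]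
      rw [show (Sum.inr (Sum.inr t) : KbookTriV p s) = vT p s t from rfl, key t]
      simp only [Pi.smul_apply, smul_eq_mul, hft t]
      ring

end Key
section Key2

open scoped Classical

variable (p s : ℕ)

/-- Any eigenvalue other than `0` and `-1` is a zero of the quintic. -/
lemma AUXspectrum_root (hs : 2 ≤ s) (x : ℝ) (hx0 : x ≠ 0) (hx1 : x ≠ -1)
    (hx : x ∈ spectrum ℝ (adjMat (KbookTri p s))) :
    AUXq (2*(s:ℝ)+(p:ℝ)+3) ((p:ℝ)+2) x = 0 := by
  have hS2 : (2:ℝ) ≤ (s:ℝ) := by exact_mod_cast hs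
  obtain ⟨f, hfne, hf⟩ := AUXeigen_of_mem_spectrum _ x hx
  have heq : ∀ z, (adjMat (KbookTri p s)).mulVec f z = x * f z := by
    intro z; rw [hf]; simp
  -- the eigenvector is constant on the classes
  have hsi : ∀ i, f (vS p s i) = (f (vU p s) + f (vV p s)) / x := by
    intro i
    have h := heq (vS p s i)
    rw [mv_s] at h
    field_simp
    linarith [h]
  have hpj : ∀ j, f (vP p s j) = f (vU p s) / x := by
    intro j
    have h := heq (vP p s j)
    rw [mv_p] at h
    field_simp
    linarith [h]
  have ht0 := heq (vT p s 0)
  have ht1 := heq (vT p s 1)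
  rw [mv_t0] at ht0
  rw [mv_t1] at ht1
  have htt : f (vT p s 1) = f (vT p s 0) := by
    have hsub : (x + 1) * (f (vT p s 0) - f (vT p s 1)) = 0 := by
      linear_combination ht1 - ht0
    rcases mul_eq_zero.mp hsub with h | h
    · exact absurd (by linarith) hx1
    · linarith
  -- the five quotient equations
  have P3 : x * ((f (vU p s) + f (vV p s)) / x) = f (vU p s) + f (vV p s) := by field_simp
  have P4 : x * (f (vU p s) / x) = f (vU p s) := by field_simp
  have P5 : x * f (vT p s 0) = f (vU p s) + f (vT p s 0) := by rw [htt] at ht0; linarith [ht0]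
  have hu := heq (vU p s)
  rw [mv_u, Finset.sum_congr rfl (fun i _ => hsi i), Finset.sum_congr rfl (fun j _ => hpj j),
    htt] at hu
  simp only [Finset.sum_const, Finset.card_univ, Fintype.card_fin, nsmul_eq_mul] at hu
  have P1 : x * f (vU p s) = (s:ℝ) * ((f (vU p s) + f (vV p s)) / x)
      + (p:ℝ) * (f (vU p s) / x) + 2 * f (vT p s 0) := by linarith [hu]
  have hv := heq (vV p s)
  rw [mv_v, Finset.sum_congr rfl (fun i _ => hsi i)] at hv
  simp only [Finset.sum_const, Finset.card_univ, Fintype.card_fin, nsmul_eq_mul] at hv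
  have P2 : x * f (vV p s) = (s:ℝ) * ((f (vU p s) + f (vV p s)) / x) := by linarith [hv]
  -- not all of the class values vanish
  have hsome : f (vU p s) ≠ 0 ∨ f (vV p s) ≠ 0 ∨ (f (vU p s) + f (vV p s)) / x ≠ 0
      ∨ f (vT p s 0) ≠ 0 := by
    by_contra hcon
    push_neg at hcon
    obtain ⟨ha0, hb0, hc0, he0⟩ := hcon
    obtain ⟨z, hz⟩ := Function.ne_iff.mp hfne
    apply hz
    show f z = (0 : ℝ)
    rcases z with (⟨⟩|⟨⟩)|((i|j)|t)
    · exact ha0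
    · exact hb0
    · rw [show (Sum.inr (Sum.inl (Sum.inl i)) : KbookTriV p s) = vS p s i from rfl, hsi i]
      exact hc0
    · rw [show (Sum.inr (Sum.inl (Sum.inr j)) : KbookTriV p s) = vP p s j from rfl, hpj j,
        ha0]
      simp
    · rw [show (Sum.inr (Sum.inr t) : KbookTriV p s) = vT p s t from rfl]
      fin_cases t
      · exact he0
      · exact htt.trans he0
  -- notation
  set a := f (vU p s)
  set b := f (vV p s)
  set e := f (vT p s 0)
  set c := (a + b) / x
  set d := a / x
  -- a ≠ 0
  have haz : a ≠ 0 := by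
    intro ha0
    have hd0 : d = 0 := by simp [d, ha0]
    have he5 : e * (x - 1) = 0 := by rw [ha0] at P5; linarith
    have hbc : b = x * c := by rw [ha0] at P3; linarith
    have hcx : c * (x^2 - (s:ℝ)) = 0 := by linear_combination P2 - x * hbc
    have hsc2e : (s:ℝ) * c + 2 * e = 0 := by
      rw [ha0, hd0] at P1; linarith
    rcases mul_eq_zero.mp he5 with he0 | hxone
    · have hc0 : c = 0 := by
        have : (s:ℝ) * c = 0 := by rw [he0] at hsc2e; linarith
        rcases mul_eq_zero.mp this with h | h
        · linarith
        · exact h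
      have hb0 : b = 0 := by rw [hbc, hc0, mul_zero]
      rcases hsome with h | h | h | h
      · exact h ha0
      · exact h hb0
      · exact h hc0
      · exact h he0
    · have hx1' : x = 1 := by linarith
      have hc0 : c = 0 := by
        rw [hx1'] at hcx
        have : c * (1 - (s:ℝ)) = 0 := by linarith [hcx]
        rcases mul_eq_zero.mp this with h | h
        · exact h
        · linarith
      have hb0 : b = 0 := by rw [hbc, hc0, mul_zero]
      have he0 : e = 0 := by
        rw [hc0] at hsc2e; linarith
      rcases hsome with h | h | h | h
      · exact h ha0
      · exact h hb0
      · exact h hc0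
      · exact h he0
  -- the quintic vanishes
  have hRa : (x^2*(x-1)*(x^2-(s:ℝ)) - (s:ℝ)*x^2*(x-1) - (p:ℝ)*(x-1)*(x^2-(s:ℝ))
      - 2*x*(x^2-(s:ℝ))) * a = 0 := by
    linear_combination (x*(x-1)*(x^2-(s:ℝ))) * P1 + (x*(x-1)*(s:ℝ)) * P2
      + ((s:ℝ)*x^2*(x-1)) * P3 + ((p:ℝ)*(x-1)*(x^2-(s:ℝ))) * P4 + (2*x*(x^2-(s:ℝ))) * P5
  have hR : x^2*(x-1)*(x^2-(s:ℝ)) - (s:ℝ)*x^2*(x-1) - (p:ℝ)*(x-1)*(x^2-(s:ℝ))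
      - 2*x*(x^2-(s:ℝ)) = 0 := by
    rcases mul_eq_zero.mp hRa with h | h
    · exact h
    · exact absurd h haz
  unfold AUXq
  linear_combination hR

end Key2

set_option maxHeartbeats 2000000

/-- Let `k ≥ 2` and `m ≥ (432k)²` with `m − k` odd.  Then `ρ(K^{k−2}_{2,(m−k−1)/2} * K₃)`
is the largest root of
`x⁵ − x⁴ + (1−m)x³ + (m−3)x² + ((1/2)mk − (1/2)k² − (1/2)k)x − 1 − k/2 + m − mk/2 + k²/2 = 0`,
and moreover `ρ(K^{k−2}_{2,(m−k−1)/2} * K₃) > √(m − k)`. -/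
theorem spectral_radius_KbookTri_size (k m : ℕ) (hk : 2 ≤ k) (hm : (432 * k) ^ 2 ≤ m)
    (hpar : (m - k) % 2 = 1) :
    IsGreatest {x : ℝ | x ^ 5 - x ^ 4 + (1 - (m : ℝ)) * x ^ 3 + ((m : ℝ) - 3) * x ^ 2 +
        ((1 / 2) * (m : ℝ) * (k : ℝ) - (1 / 2) * (k : ℝ) ^ 2 - (1 / 2) * (k : ℝ)) * x
        - 1 - (k : ℝ) / 2 + (m : ℝ) - (m : ℝ) * (k : ℝ) / 2 + (k : ℝ) ^ 2 / 2 = 0}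
      (specRad (KbookTri (k - 2) ((m - k - 1) / 2))) ∧
    Real.sqrt ((m : ℝ) - (k : ℝ)) < specRad (KbookTri (k - 2) ((m - k - 1) / 2)) := by
  classical
  -- ℕ arithmetic
  have h432 : (432 * k) ^ 2 = 186624 * (k * k) := by ring
  have hkk : 186624 * (k * k) ≤ m := by rw [← h432]; exact hm
  have hk2k : 2 * k ≤ k * k := Nat.mul_le_mul_right k hk
  have hm6 : k + 6 ≤ m := by nlinarith [hkk, hk2k, hk]
  set p := k - 2 with hpdef
  set s := (m - k - 1) / 2 with hsdef
  have h2s : 2 * s + 1 + k = m := by omega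
  have hs2 : 2 ≤ s := by omega
  have hpk : p + 2 = k := by omega
  -- ℝ casts
  have hMR : (m:ℝ) = 2*(s:ℝ) + (p:ℝ) + 3 := by
    have h1 : ((2*s + 1 + k : ℕ) : ℝ) = (m:ℝ) := by rw [h2s]
    have h2 : ((p + 2 : ℕ) : ℝ) = (k:ℝ) := by rw [hpk]
    push_cast at h1 h2
    linarith
  have hKR : (k:ℝ) = (p:ℝ) + 2 := by
    have h2 : ((p + 2 : ℕ) : ℝ) = (k:ℝ) := by rw [hpk]
    push_cast at h2
    linarith
  have hK2R : (2:ℝ) ≤ (k:ℝ) := by exact_mod_cast hk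
  have hm6R : (k:ℝ) + 6 ≤ (m:ℝ) := by exact_mod_cast hm6
  have hkkR : 186624 * ((k:ℝ) * (k:ℝ)) ≤ (m:ℝ) := by exact_mod_cast hkk
  -- the spectrum
  set Spec := spectrum ℝ (adjMat (KbookTri p s)) with hSpecDef
  have hρdef : specRad (KbookTri p s) = sSup Spec := rfl
  -- conversions between the two forms of the quintic
  have hconv : ∀ y : ℝ, AUXq (m:ℝ) (k:ℝ) y = AUXq (2*(s:ℝ)+(p:ℝ)+3) ((p:ℝ)+2) y := by
    intro y; rw [hMR, hKR]
  -- the square root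
  set t := Real.sqrt ((m:ℝ) - (k:ℝ)) with htdef
  have htnn : (0:ℝ) ≤ (m:ℝ) - (k:ℝ) := by linarith
  have ht2 : t^2 = (m:ℝ) - (k:ℝ) := Real.sq_sqrt htnn
  have ht0 : 0 ≤ t := Real.sqrt_nonneg _
  have ht1 : 1 ≤ t := by nlinarith [ht2, ht0, hm6R, hK2R]
  -- value of the quintic at t is negative
  have hMt : (m:ℝ) = t^2 + (k:ℝ) := by linarith
  have hqt : AUXq (m:ℝ) (k:ℝ) t < 0 := by
    have hident : AUXq (m:ℝ) (k:ℝ) t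
        = -t^2 - t - ((k:ℝ)/2 - 1) * ((t^2+1)*(t-1)) := by
      unfold AUXq
      linear_combination (-t^3 + t^2 + ((k:ℝ)/2)*t + 1 - (k:ℝ)/2) * hMt
    have h1 : 0 ≤ ((k:ℝ)/2 - 1) * ((t^2+1)*(t-1)) := by
      apply mul_nonneg (by linarith)
      apply mul_nonneg (by positivity) (by linarith)
    nlinarith [hident, h1, ht1]
  -- value of the quintic at m is positive
  have hqM : 0 < AUXq (m:ℝ) (k:ℝ) (m:ℝ) := by
    have e1 : 0 ≤ ((m:ℝ)*(k:ℝ)/2)*((m:ℝ) - (k:ℝ) - 2) := by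
      apply mul_nonneg
      · have : (0:ℝ) ≤ (m:ℝ) := by linarith
        positivity
      · linarith
    have hM2 : (2:ℝ) ≤ (m:ℝ) := by linarith
    have i1 : 0 ≤ (m:ℝ)^2*((m:ℝ)-2) := mul_nonneg (sq_nonneg _) (by linarith)
    have i2 : 0 ≤ (m:ℝ)^3 - 2*(m:ℝ)^2 + 2*(m:ℝ) - 3 := by nlinarith [i1, hM2]
    have e2 : 0 ≤ (m:ℝ)^2*((m:ℝ)^3 - 2*(m:ℝ)^2 + 2*(m:ℝ) - 3) :=
      mul_nonneg (sq_nonneg _) i2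
    have e3 : (0:ℝ) ≤ (k:ℝ)^2/2 - (k:ℝ)/2 - 1 := by nlinarith [hK2R]
    have hident2 : AUXq (m:ℝ) (k:ℝ) (m:ℝ)
        = (m:ℝ)^2*((m:ℝ)^3 - 2*(m:ℝ)^2 + 2*(m:ℝ) - 3)
          + ((m:ℝ)*(k:ℝ)/2)*((m:ℝ) - (k:ℝ) - 2) + ((k:ℝ)^2/2 - (k:ℝ)/2 - 1) + (m:ℝ) := by
      unfold AUXq; ring
    rw [hident2]
    have hMpos : (0:ℝ) < (m:ℝ) := by linarith
    linarith [e1, e2, e3, hMpos]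
  -- t < m
  have htm : t < (m:ℝ) := by
    have h1 : t ≤ Real.sqrt (m:ℝ) := Real.sqrt_le_sqrt (by linarith)
    have h2 : Real.sqrt (m:ℝ) < (m:ℝ) := by
      rw [Real.sqrt_lt' (by linarith)]
      nlinarith [hm6R, hK2R]
    linarith
  -- a root of the quintic above t, by the intermediate value theorem
  have hcont : ContinuousOn (fun y : ℝ => AUXq (m:ℝ) (k:ℝ) y) (Set.Icc t (m:ℝ)) := by
    apply Continuous.continuousOn
    unfold AUXq
    fun_prop
  have hIVT := intermediate_value_Ioo (le_of_lt htm) hcont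
  have h0mem : (0:ℝ) ∈ Set.Ioo (AUXq (m:ℝ) (k:ℝ) t) (AUXq (m:ℝ) (k:ℝ) (m:ℝ)) :=
    ⟨hqt, hqM⟩
  obtain ⟨ξ, hξI, hξ⟩ := hIVT h0mem
  have hξspec : ξ ∈ Spec := by
    apply AUXroot_mem_spectrum p s hs2
    rw [← hconv]
    exact hξ
  -- the polynomial, for finiteness of the spectrum
  set c1 : ℝ := (1/2)*(m:ℝ)*(k:ℝ) - (1/2)*(k:ℝ)^2 - (1/2)*(k:ℝ) with hc1
  set c0 : ℝ := -1 - (k:ℝ)/2 + (m:ℝ) - (m:ℝ)*(k:ℝ)/2 + (k:ℝ)^2/2 with hc0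
  set Qp : Polynomial ℝ := Polynomial.X^5 - Polynomial.X^4
      + Polynomial.C (1 - (m:ℝ)) * Polynomial.X^3 + Polynomial.C ((m:ℝ) - 3) * Polynomial.X^2
      + Polynomial.C c1 * Polynomial.X + Polynomial.C c0 with hQp
  have heval : ∀ y : ℝ, Qp.eval y = AUXq (m:ℝ) (k:ℝ) y := by
    intro y
    rw [hQp]
    unfold AUXq
    simp [hc1, hc0]
    ring
  have hQdeg : Qp.natDegree = 5 := by
    rw [hQp]
    compute_degree!
  have hQne : Qp ≠ 0 := by
    intro h
    rw [h] at hQdeg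
    simp at hQdeg
  have hroots_fin : {y : ℝ | AUXq (m:ℝ) (k:ℝ) y = 0}.Finite := by
    apply Set.Finite.subset (Polynomial.finite_setOf_isRoot hQne)
    intro y hy
    simp only [Set.mem_setOf_eq, Polynomial.IsRoot, heval]
    exact hy
  have hSpec_fin : Spec.Finite := by
    apply Set.Finite.subset (hroots_fin.union ((Set.finite_singleton (0:ℝ)).union
      (Set.finite_singleton (-1:ℝ))))
    intro y hy
    by_cases hy0 : y = 0
    · exact Or.inr (Or.inl hy0)
    by_cases hy1 : y = -1
    · exact Or.inr (Or.inr hy1)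
    · left
      show AUXq (m:ℝ) (k:ℝ) y = 0
      rw [hconv]
      exact AUXspectrum_root p s hs2 y hy0 hy1 hy
  have hbdd : BddAbove Spec := hSpec_fin.bddAbove
  have hne : Spec.Nonempty := ⟨ξ, hξspec⟩
  have hmem : sSup Spec ∈ Spec := hne.csSup_mem hSpec_fin
  have hξle : ξ ≤ sSup Spec := le_csSup hbdd hξspec
  have htlt : t < sSup Spec := lt_of_lt_of_le hξI.1 hξle
  have hρ0 : sSup Spec ≠ 0 := by intro h; rw [h] at htlt; linarith
  have hρ1 : sSup Spec ≠ -1 := by intro h; rw [h] at htlt; linarith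
  have hρroot : AUXq (m:ℝ) (k:ℝ) (sSup Spec) = 0 := by
    rw [hconv]
    exact AUXspectrum_root p s hs2 _ hρ0 hρ1 hmem
  constructor
  · constructor
    · exact hρroot
    · intro y hy
      have hyq : AUXq (m:ℝ) (k:ℝ) y = 0 := hy
      have hymem : y ∈ Spec := by
        apply AUXroot_mem_spectrum p s hs2
        rw [← hconv]
        exact hyq
      exact le_csSup hbdd hymem
  · exact htlt
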